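/- Let (F, ≺) be an IS-family and Pr_x the set of principal elements (those S with hat(S) ≠ ∅) of excess at most x. Then |Pr_x| ≤ 2^{x+1} · |sm(F)|. -/

import Mathlib

/-- A family of subsets of a finite set `V` with a strict partial order. -/
structure ISFamily (V : Type*) [DecidableEq V] [Fintype V] where
  F : Finset (Finset V)
  prec : Finset V → Finset V → Prop
  prec_trans : ∀ {a b c : Finset V}, prec a b → prec b c → prec a c
  prec_irrefl : ∀ a : Finset V, ¬ prec a a

namespace ISFamily

variable {V : Type*} [DecidableEq V] [Fintype V] (Fam : ISFamily V)

/-- The immediate predecessors of `S` in the family. -/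
def Pred (S : Finset V) : Set (Finset V) :=
  {S' | S' ∈ Fam.F ∧ Fam.prec S' S ∧
    ¬ ∃ S'' ∈ Fam.F, Fam.prec S' S'' ∧ Fam.prec S'' S}

/-- `S'` covers `v` if some member of the family preceding `S'` contains `v` while
`S'` does not. -/
def Covers (S' : Finset V) (v : V) : Prop :=
  ∃ S'' ∈ Fam.F, Fam.prec S'' S' ∧ v ∈ S'' ∧ v ∉ S'

/-- The visible set of `S`: vertices belonging to some immediate predecessor of `S`
and not covered by any immediate predecessor of `S`. -/
def Vis (S : Finset V) : Set V :=
  {v | (∃ S' ∈ Fam.Pred S, v ∈ S') ∧ ∀ S' ∈ Fam.Pred S, ¬ Fam.Covers S' v}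

/-- `hat S = S \ ⋃_{S' ≺ S} S'`. -/
def hat (S : Finset V) : Set V :=
  ↑S \ ⋃ S' ∈ {S' | S' ∈ Fam.F ∧ Fam.prec S' S}, (↑S' : Set V)

/-- `W` is a witness of `v` w.r.t. `S`: a minimal element of the family with
`S ≺ W` and `v ∉ W`. -/
def IsWitness (S : Finset V) (v : V) (W : Finset V) : Prop :=
  W ∈ Fam.F ∧ Fam.prec S W ∧ v ∉ W ∧
    ∀ W' ∈ Fam.F, Fam.prec S W' → v ∉ W' → ¬ Fam.prec W' W

/-- The axioms making `(F, ≺)` an IS-family with smallest element `sm`. -/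
structure IsIS (sm : Finset V) : Prop where
  sm_mem : sm ∈ Fam.F
  SE : ∀ S ∈ Fam.F, S ≠ sm → Fam.prec sm S
  SM : ∀ S₁ ∈ Fam.F, ∀ S₂ ∈ Fam.F, Fam.prec S₁ S₂ → S₁.card < S₂.card
  SW : ∀ S ∈ Fam.F, ∀ v ∈ S, ∀ W₁ W₂ : Finset V,
    Fam.IsWitness S v W₁ → Fam.IsWitness S v W₂ → W₁ = W₂
  TE : ∀ S₁ ∈ Fam.F, ∀ S₂ ∈ Fam.F, ∀ S₃ ∈ Fam.F,
    Fam.prec S₁ S₂ → Fam.prec S₂ S₃ → ∀ v ∈ S₁, v ∉ S₂ → v ∉ S₃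
  LVS : ∀ S ∈ Fam.F, ∀ S' ∈ Fam.Pred S, S'.card ≤ (Fam.Vis S).ncard
  DVS : ∀ S ∈ Fam.F, S ≠ sm → ¬ (Fam.Vis S ⊆ ↑S)

/-- The excess of `S` relative to the smallest element `sm`. -/
def ex (sm S : Finset V) : ℕ := S.card - sm.card

/-- The members of the family of excess at most `x`. -/
def Ex (sm : Finset V) (x : ℕ) : Finset (Finset V) :=
  Fam.F.filter (fun S => ex sm S ≤ x)

/-- The `x`-hat of `S`: elements of `hat S` not excluded by any member of `E_x`
succeeding `S`. -/
def hatx (sm : Finset V) (x : ℕ) (S : Finset V) : Set V :=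
  {v ∈ Fam.hat S | ¬ ∃ S' ∈ Fam.Ex sm x, Fam.prec S S' ∧ v ∉ S'}

/-- `M(x) = Σ_{S ∈ E_x} 2^{x - ex(S)} · |hat_x(S)|`. -/
noncomputable def M (sm : Finset V) (x : ℕ) : ℕ :=
  ∑ S ∈ Fam.Ex sm x, 2 ^ (x - ex sm S) * (Fam.hatx sm x S).ncard

end ISFamily

/-!
A token is a pair `(U, w)` with `w ∈ hat U`; it dies at level `x` once a member of excess at most
`x` above `U` omits `w`. `M x` weighs each token still alive at level `x` by `2 ^ (x - ex U)`.
Passing to level `x + 1` doubles the old weights, and the hats of the new members `S` of excess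
`x + 1` are paid for by the tokens dying at that step: by (DVS) some vertex is visible at `S` but
missing from `S`, each such vertex is the vertex of a token below `S` whose witness is `S`
(unique by (SW)), and (LVS) bounds `|hat S|` by the weights of these tokens. Hence
`M x ≤ 2 ^ x |sm|`, at most `(2 ^ x - 1) |sm|` tokens are dead at level `x`, and choosing for
every member `S ≠ sm` of excess at most `x` a token witnessed by `S` injects these members into
the dead tokens.
-/

theorem Finset.add_card_le_sum_two_pow {ι : Type*} [DecidableEq ι] {s : Finset ι} (d : ι → ℕ)
    {i : ι} (hi : i ∈ s) : d i + s.card ≤ ∑ j ∈ s, 2 ^ d j := by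
  have hrest : (s.erase i).card ≤ ∑ j ∈ s.erase i, 2 ^ d j := by
    simpa using Finset.card_nsmul_le_sum (s.erase i) (fun j => 2 ^ d j) 1
      fun j _ => Nat.one_le_two_pow
  rw [← Finset.add_sum_erase s _ hi, ← Finset.card_erase_add_one hi]
  have : d i < 2 ^ d i := Nat.lt_two_pow_self
  omega

namespace ISFamily

variable {V : Type*} [DecidableEq V] [Fintype V]

section

variable {Fam : ISFamily V} {sm S T U K : Finset V} {w : V} {x : ℕ}

theorem mem_hat : w ∈ Fam.hat S ↔ w ∈ S ∧ ∀ U ∈ Fam.F, Fam.prec U S → w ∉ U := by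
  simp [hat]

theorem hat_subset : Fam.hat S ⊆ ↑S := Set.sdiff_subset

theorem mem_Ex : S ∈ Fam.Ex sm x ↔ S ∈ Fam.F ∧ S.card ≤ sm.card + x := by
  rw [Ex, Finset.mem_filter, ex, Nat.sub_le_iff_le_add']

theorem ncard_hat_add_ncard_vis_le :
    (Fam.hat S).ncard + (Fam.Vis S).ncard ≤ S.card + (Fam.Vis S \ ↑S).ncard := by
  have hdisj : Disjoint (Fam.hat S) (Fam.Vis S ∩ ↑S) := by
    refine Set.disjoint_left.mpr fun v hv ⟨⟨⟨T, hT, hvT⟩, _⟩, _⟩ => ?_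
    exact (mem_hat.mp hv).2 T hT.1 hT.2.1 hvT
  have hsub : Fam.hat S ∪ (Fam.Vis S ∩ ↑S) ⊆ ↑S :=
    Set.union_subset hat_subset Set.inter_subset_right
  have hle := Set.ncard_le_ncard hsub
  rw [Set.ncard_union_eq hdisj, Set.ncard_coe_finset] at hle
  have := Set.ncard_inter_add_ncard_sdiff_eq_ncard (Fam.Vis S) (↑S : Set V)
  omega

namespace IsIS

variable (hIS : Fam.IsIS sm)
include hIS

theorem card_sm_le (hS : S ∈ Fam.F) : sm.card ≤ S.card := by
  by_cases h : S = sm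
  · rw [h]
  · exact (hIS.SM sm hIS.sm_mem S hS (hIS.SE S hS h)).le

theorem exists_prec_minimal {D : Set (Finset V)} (hD : ∀ Z ∈ D, Z ∈ Fam.F) (hne : D.Nonempty) :
    ∃ Z ∈ D, ∀ Z' ∈ D, ¬ Fam.prec Z' Z := by
  obtain ⟨Z, hZ, hmin⟩ := D.exists_min_image Finset.card D.toFinite hne
  exact ⟨Z, hZ, fun Z' hZ' h => (hmin Z' hZ').not_gt (hIS.SM _ (hD Z' hZ') _ (hD Z hZ) h)⟩

theorem exists_prec_maximal {D : Set (Finset V)} (hD : ∀ Z ∈ D, Z ∈ Fam.F) (hne : D.Nonempty) :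
    ∃ Z ∈ D, ∀ Z' ∈ D, ¬ Fam.prec Z Z' := by
  obtain ⟨Z, hZ, hmax⟩ := D.exists_max_image Finset.card D.toFinite hne
  exact ⟨Z, hZ, fun Z' hZ' h => (hmax Z' hZ').not_gt (hIS.SM _ (hD Z hZ) _ (hD Z' hZ') h)⟩

theorem exists_mem_pred (hU : U ∈ Fam.F) (hUS : Fam.prec U S) :
    ∃ T ∈ Fam.Pred S, U = T ∨ Fam.prec U T := by
  obtain ⟨T, ⟨hT, hTS, hUT⟩, hmax⟩ := hIS.exists_prec_maximal
    (D := {Z | Z ∈ Fam.F ∧ Fam.prec Z S ∧ (U = Z ∨ Fam.prec U Z)}) (fun Z hZ => hZ.1)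
    ⟨U, hU, hUS, Or.inl rfl⟩
  refine ⟨T, ⟨hT, hTS, fun ⟨Z, hZ, hTZ, hZS⟩ => hmax Z ⟨hZ, hZS, Or.inr ?_⟩ hTZ⟩, hUT⟩
  rcases hUT with rfl | hUT
  exacts [hTZ, Fam.prec_trans hUT hTZ]

theorem card_le_of_prec_or_eq (hU : U ∈ Fam.F) (hT : T ∈ Fam.F) (hUT : U = T ∨ Fam.prec U T) :
    U.card ≤ T.card := by
  rcases hUT with rfl | hUT
  exacts [le_rfl, (hIS.SM U hU T hT hUT).le]

theorem exists_isWitness_card_le (hK : K ∈ Fam.F) (hUK : Fam.prec U K)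
    (hwK : w ∉ K) : ∃ W, Fam.IsWitness U w W ∧ W.card ≤ K.card := by
  obtain ⟨W, ⟨hW, hUW, hwW, hWK⟩, hmin⟩ := hIS.exists_prec_minimal
    (D := {Z | Z ∈ Fam.F ∧ Fam.prec U Z ∧ w ∉ Z ∧ (Z = K ∨ Fam.prec Z K)}) (fun Z hZ => hZ.1)
    ⟨K, hK, hUK, hwK, Or.inl rfl⟩
  refine ⟨W, ⟨hW, hUW, hwW, fun Z hZ hUZ hwZ hZW => hmin Z ⟨hZ, hUZ, hwZ, Or.inr ?_⟩ hZW⟩,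
    hIS.card_le_of_prec_or_eq hW hK hWK⟩
  rcases hWK with rfl | hWK
  exacts [hZW, Fam.prec_trans hZW hWK]

theorem exists_mem_hat (hT : T ∈ Fam.F) (hwT : w ∈ T) :
    ∃ U ∈ Fam.F, (U = T ∨ Fam.prec U T) ∧ w ∈ Fam.hat U := by
  obtain ⟨U, ⟨hU, hwU, hUT⟩, hmin⟩ := hIS.exists_prec_minimal
    (D := {Z | Z ∈ Fam.F ∧ w ∈ Z ∧ (Z = T ∨ Fam.prec Z T)}) (fun Z hZ => hZ.1)
    ⟨T, hT, hwT, Or.inl rfl⟩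
  refine ⟨U, hU, hUT, mem_hat.mpr ⟨hwU, fun Z hZ hZU hwZ => hmin Z ⟨hZ, hwZ, Or.inr ?_⟩ hZU⟩⟩
  rcases hUT with rfl | hUT
  exacts [hZU, Fam.prec_trans hZU hUT]

end IsIS

end

noncomputable def charged (Fam : ISFamily V) (S : Finset V) : Finset (Finset V × V) := by
  classical exact Finset.univ.filter fun τ =>
    τ.1 ∈ Fam.F ∧ Fam.prec τ.1 S ∧ τ.2 ∈ Fam.hat τ.1 ∧ τ.2 ∈ Fam.Vis S ∧ τ.2 ∉ S

section

variable {Fam : ISFamily V} {sm S U : Finset V} {τ : Finset V × V}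

theorem mem_charged : τ ∈ Fam.charged S ↔
    τ.1 ∈ Fam.F ∧ Fam.prec τ.1 S ∧ τ.2 ∈ Fam.hat τ.1 ∧ τ.2 ∈ Fam.Vis S ∧ τ.2 ∉ S := by
  classical simp [charged]

namespace IsIS

variable (hIS : Fam.IsIS sm)
include hIS

theorem isWitness_of_mem_charged (hS : S ∈ Fam.F) (hτ : τ ∈ Fam.charged S) :
    Fam.IsWitness τ.1 τ.2 S := by
  obtain ⟨hU, hUS, hw, hwVis, hwS⟩ := mem_charged.mp hτ
  refine ⟨hS, hUS, hwS, fun W hW hUW hwW hWS => ?_⟩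
  obtain ⟨T, hT, hWT⟩ := hIS.exists_mem_pred hW hWS
  have hUT : Fam.prec τ.1 T := by
    rcases hWT with rfl | hWT
    exacts [hUW, Fam.prec_trans hUW hWT]
  have hwT : τ.2 ∉ T := by
    rcases hWT with rfl | hWT
    exacts [hwW, hIS.TE _ hU _ hW _ hT.1 hUW hWT _ (mem_hat.mp hw).1 hwW]
  exact hwVis.2 T hT ⟨τ.1, hU, hUT, (mem_hat.mp hw).1, hwT⟩

theorem pairwiseDisjoint_charged : (↑Fam.F : Set (Finset V)).PairwiseDisjoint Fam.charged := by
  intro S₁ hS₁ S₂ hS₂ hne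
  refine Finset.disjoint_left.mpr fun τ h₁ h₂ => hne ?_
  have hU := (mem_charged.mp h₁).1
  have hw := (mem_hat.mp (mem_charged.mp h₁).2.2.1).1
  exact hIS.SW _ hU _ hw _ _ (hIS.isWitness_of_mem_charged hS₁ h₁)
    (hIS.isWitness_of_mem_charged hS₂ h₂)

theorem ncard_vis_sdiff_le_card_charged :
    (Fam.Vis S \ ↑S).ncard ≤ (Fam.charged S).card := by
  classical
  have hsub : Fam.Vis S \ ↑S ⊆ ↑((Fam.charged S).image Prod.snd) := by
    rintro w ⟨hwVis, hwS⟩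
    obtain ⟨T, hT, hwT⟩ := hwVis.1
    obtain ⟨U, hU, hUT, hw⟩ := hIS.exists_mem_hat hT.1 hwT
    have hUS : Fam.prec U S := by
      rcases hUT with rfl | hUT
      exacts [hT.2.1, Fam.prec_trans hUT hT.2.1]
    exact Finset.mem_image.mpr ⟨(U, w), mem_charged.mpr ⟨hU, hUS, hw, hwVis, hwS⟩, rfl⟩
  calc (Fam.Vis S \ ↑S).ncard ≤ ((Fam.charged S).image Prod.snd).card := by
        rw [← Set.ncard_coe_finset]; exact Set.ncard_le_ncard hsub
    _ ≤ (Fam.charged S).card := Finset.card_image_le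

theorem charged_nonempty (hS : S ∈ Fam.F) (hne : S ≠ sm) : (Fam.charged S).Nonempty := by
  obtain ⟨w, hw⟩ := Set.not_subset.mp (hIS.DVS S hS hne)
  exact Finset.card_pos.mp
    (((Set.ncard_pos).mpr ⟨w, hw⟩).trans_le hIS.ncard_vis_sdiff_le_card_charged)

theorem ncard_hat_add_card_le (hS : S ∈ Fam.F) (hτ : τ ∈ Fam.charged S) :
    (Fam.hat S).ncard + τ.1.card ≤ S.card + (Fam.Vis S \ ↑S).ncard := by
  obtain ⟨hU, hUS, -⟩ := mem_charged.mp hτ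
  obtain ⟨T, hT, hUT⟩ := hIS.exists_mem_pred hU hUS
  have := hIS.card_le_of_prec_or_eq hU hT.1 hUT
  have := hIS.LVS S hS T hT
  have := ncard_hat_add_ncard_vis_le (Fam := Fam) (S := S)
  omega

theorem ncard_hat_le_sum_charged (hS : S ∈ Fam.F) (hne : S ≠ sm) :
    (Fam.hat S).ncard ≤ ∑ τ ∈ Fam.charged S, 2 ^ (S.card - τ.1.card) := by
  obtain ⟨τ, hτ⟩ := hIS.charged_nonempty hS hne
  have := hIS.ncard_hat_add_card_le hS hτ
  have := hIS.ncard_vis_sdiff_le_card_charged (S := S)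
  have := Finset.add_card_le_sum_two_pow (fun τ : Finset V × V => S.card - τ.1.card) hτ
  omega

theorem card_le_of_mem_charged (hS : S ∈ Fam.F) (hτ : τ ∈ Fam.charged S) {K : Finset V}
    (hK : K ∈ Fam.F) (hUK : Fam.prec τ.1 K) (hwK : τ.2 ∉ K) : S.card ≤ K.card := by
  obtain ⟨hU, -, hw, -⟩ := mem_charged.mp hτ
  obtain ⟨W, hW, hWK⟩ := hIS.exists_isWitness_card_le hK hUK hwK
  rwa [hIS.SW _ hU _ (mem_hat.mp hw).1 _ _ hW (hIS.isWitness_of_mem_charged hS hτ)] at hWK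

end IsIS

end

noncomputable def alive (Fam : ISFamily V) (sm : Finset V) (x : ℕ) : Finset (Finset V × V) := by
  classical exact Finset.univ.filter fun τ => τ.1 ∈ Fam.Ex sm x ∧ τ.2 ∈ Fam.hatx sm x τ.1

noncomputable def dead (Fam : ISFamily V) (sm : Finset V) (x : ℕ) : Finset (Finset V × V) := by
  classical exact Finset.univ.filter fun τ =>
    τ.1 ∈ Fam.F ∧ τ.2 ∈ Fam.hat τ.1 ∧ ∃ K ∈ Fam.Ex sm x, Fam.prec τ.1 K ∧ τ.2 ∉ K

section

variable {Fam : ISFamily V} {sm S : Finset V} {τ : Finset V × V} {x l : ℕ}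

theorem mem_alive : τ ∈ Fam.alive sm x ↔ τ.1 ∈ Fam.Ex sm x ∧ τ.2 ∈ Fam.hatx sm x τ.1 := by
  classical simp [alive]

theorem mem_dead : τ ∈ Fam.dead sm x ↔
    τ.1 ∈ Fam.F ∧ τ.2 ∈ Fam.hat τ.1 ∧ ∃ K ∈ Fam.Ex sm x, Fam.prec τ.1 K ∧ τ.2 ∉ K := by
  classical simp [dead]

theorem M_eq_sum_alive : Fam.M sm x = ∑ τ ∈ Fam.alive sm x, 2 ^ (x - ex sm τ.1) := by
  classical
  rw [Finset.sum_finset_product _ (Fam.Ex sm x) (fun S => Finset.univ.filter (· ∈ Fam.hatx sm x S))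
    (by simp [mem_alive]), M]
  refine Finset.sum_congr rfl fun S _ => ?_
  simp only [Finset.sum_const, smul_eq_mul, mul_comm, ← Set.ncard_coe_finset, Finset.coe_filter]
  simp

theorem card_alive_le_M : (Fam.alive sm x).card ≤ Fam.M sm x := by
  rw [M_eq_sum_alive]
  simpa using Finset.card_nsmul_le_sum (Fam.alive sm x) (fun τ => 2 ^ (x - ex sm τ.1)) 1
    fun τ _ => Nat.one_le_two_pow

theorem charged_subset_dead (hS : S ∈ Fam.Ex sm x) : Fam.charged S ⊆ Fam.dead sm x := by
  intro τ hτ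
  obtain ⟨hU, hUS, hw, -, hwS⟩ := mem_charged.mp hτ
  exact mem_dead.mpr ⟨hU, hw, S, hS, hUS, hwS⟩

theorem sum_alive_succ_filter_le :
    ∑ τ ∈ (Fam.alive sm (l + 1)).filter (fun τ => ex sm τ.1 ≤ l), 2 ^ (l + 1 - ex sm τ.1) ≤
      2 * ∑ τ ∈ Fam.alive sm l \ Fam.dead sm (l + 1), 2 ^ (l - ex sm τ.1) := by
  have hsub : (Fam.alive sm (l + 1)).filter (fun τ => ex sm τ.1 ≤ l) ⊆
      Fam.alive sm l \ Fam.dead sm (l + 1) := by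
    intro τ hτ
    obtain ⟨hτ, hex⟩ := Finset.mem_filter.mp hτ
    obtain ⟨hEx, hw, hlive⟩ := mem_alive.mp hτ
    have hEx' : ∀ {K}, K ∈ Fam.Ex sm l → K ∈ Fam.Ex sm (l + 1) := fun hK =>
      mem_Ex.mpr ⟨(mem_Ex.mp hK).1, by have := (mem_Ex.mp hK).2; omega⟩
    refine Finset.mem_sdiff.mpr ⟨mem_alive.mpr ⟨mem_Ex.mpr ⟨(mem_Ex.mp hEx).1, ?_⟩,
      hw, fun ⟨K, hK, hτK⟩ => hlive ⟨K, hEx' hK, hτK⟩⟩, fun hdead => ?_⟩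
    · simp only [ex] at hex; omega
    · obtain ⟨-, -, hkill⟩ := mem_dead.mp hdead
      exact hlive hkill
  rw [Finset.mul_sum]
  calc _ = ∑ τ ∈ (Fam.alive sm (l + 1)).filter (fun τ => ex sm τ.1 ≤ l),
        2 * 2 ^ (l - ex sm τ.1) := by
        refine Finset.sum_congr rfl fun τ hτ => ?_
        rw [← pow_succ', Nat.sub_add_comm (Finset.mem_filter.mp hτ).2]
    _ ≤ _ := Finset.sum_le_sum_of_subset hsub

theorem card_alive_succ_filter_le :
    ((Fam.alive sm (l + 1)).filter (fun τ => ¬ ex sm τ.1 ≤ l)).card ≤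
      ∑ S ∈ Fam.F.filter (fun S => ex sm S = l + 1), (Fam.hat S).ncard := by
  classical
  rw [Finset.card_eq_sum_card_fiberwise (f := Prod.fst) fun τ hτ => ?_]
  · refine Finset.sum_le_sum fun S _ => ?_
    rw [← Set.ncard_coe_finset]
    refine Set.ncard_le_ncard_of_injOn Prod.snd (fun τ hτ => ?_) (fun τ₁ h₁ τ₂ h₂ h => ?_)
    · obtain ⟨hτ, hS⟩ := Finset.mem_filter.mp hτ
      exact hS ▸ (mem_alive.mp (Finset.mem_filter.mp hτ).1).2.1
    · exact Prod.ext (((Finset.mem_filter.mp h₁).2).trans (Finset.mem_filter.mp h₂).2.symm) h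
  · obtain ⟨hτ, hex⟩ := Finset.mem_filter.mp hτ
    have hEx := mem_Ex.mp (mem_alive.mp hτ).1
    exact Finset.mem_filter.mpr ⟨hEx.1, by simp only [ex] at hex ⊢; omega⟩

theorem ncard_principal_le :
    {S | S ∈ Fam.F ∧ ex sm S ≤ x ∧ (Fam.hat S).Nonempty}.ncard ≤
      ((Fam.Ex sm x).erase sm).card + sm.card := by
  set P := {S | S ∈ Fam.F ∧ ex sm S ≤ x ∧ (Fam.hat S).Nonempty}
  have hP : P \ {sm} ⊆ ↑((Fam.Ex sm x).erase sm) := fun S ⟨⟨hS, hex, _⟩, hne⟩ =>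
    Finset.mem_erase.mpr ⟨hne, Finset.mem_filter.mpr ⟨hS, hex⟩⟩
  by_cases hsm : sm ∈ P
  · have : 1 ≤ sm.card := Finset.card_pos.mpr
      (Finset.coe_nonempty.mp (hsm.2.2.mono hat_subset))
    calc P.ncard ≤ (insert sm (↑((Fam.Ex sm x).erase sm) : Set (Finset V))).ncard :=
          Set.ncard_le_ncard (Set.sdiff_singleton_subset_iff.mp hP)
      _ ≤ _ := by
          have := Set.ncard_insert_le sm (↑((Fam.Ex sm x).erase sm) : Set (Finset V))
          rw [Set.ncard_coe_finset] at this
          omega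
  · rw [Set.sdiff_singleton_eq_self hsm] at hP
    exact (Set.ncard_le_ncard hP).trans (by rw [Set.ncard_coe_finset]; omega)

namespace IsIS

variable (hIS : Fam.IsIS sm)
include hIS

theorem eq_sm_of_card_le (hS : S ∈ Fam.F) (h : S.card ≤ sm.card) : S = sm := by
  by_contra hne
  exact (hIS.SM sm hIS.sm_mem S hS (hIS.SE S hS hne)).not_ge h

theorem Ex_zero : Fam.Ex sm 0 = {sm} := by
  ext S
  rw [mem_Ex, Finset.mem_singleton]
  exact ⟨fun h => hIS.eq_sm_of_card_le h.1 h.2, by rintro rfl; exact ⟨hIS.sm_mem, le_rfl⟩⟩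

theorem charged_subset_alive_inter_dead (hS : S ∈ Fam.F) (hex : ex sm S = l + 1) :
    Fam.charged S ⊆ Fam.alive sm l ∩ Fam.dead sm (l + 1) := by
  intro τ hτ
  obtain ⟨hU, hUS, hw, -⟩ := mem_charged.mp hτ
  have hUS' := hIS.SM _ hU _ hS hUS
  have hEx : ∀ {K}, K ∈ Fam.Ex sm l → S.card ≤ K.card → False := fun hK hSK => by
    have := (mem_Ex.mp hK).2; simp only [ex] at hex; omega
  refine Finset.mem_inter.mpr ⟨mem_alive.mpr ⟨mem_Ex.mpr ⟨hU, ?_⟩, hw, ?_⟩,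
    charged_subset_dead (mem_Ex.mpr ⟨hS, ?_⟩) hτ⟩
  · simp only [ex] at hex; omega
  · rintro ⟨K, hK, hUK, hwK⟩
    exact hEx hK (hIS.card_le_of_mem_charged hS hτ (mem_Ex.mp hK).1 hUK hwK)
  · simp only [ex] at hex; omega

theorem sum_ncard_hat_le :
    ∑ S ∈ Fam.F.filter (fun S => ex sm S = l + 1), (Fam.hat S).ncard ≤
      2 * ∑ τ ∈ Fam.alive sm l ∩ Fam.dead sm (l + 1), 2 ^ (l - ex sm τ.1) := by
  set New := Fam.F.filter (fun S => ex sm S = l + 1)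
  have hNew : ∀ {S}, S ∈ New → S ∈ Fam.F ∧ ex sm S = l + 1 := Finset.mem_filter.mp
  calc _ ≤ ∑ S ∈ New, ∑ τ ∈ Fam.charged S, 2 ^ (S.card - τ.1.card) :=
        Finset.sum_le_sum fun S hS => hIS.ncard_hat_le_sum_charged (hNew hS).1 fun h => by
          have := (hNew hS).2; simp [h, ex] at this
    _ = ∑ S ∈ New, ∑ τ ∈ Fam.charged S, 2 * 2 ^ (l - ex sm τ.1) := by
        refine Finset.sum_congr rfl fun S hS => Finset.sum_congr rfl fun τ hτ => ?_
        obtain ⟨hU, hUS, -⟩ := mem_charged.mp hτ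
        have := hIS.SM _ hU _ (hNew hS).1 hUS
        have := hIS.card_sm_le hU
        have := (hNew hS).2
        rw [← pow_succ']
        congr 1
        simp only [ex] at this ⊢
        omega
    _ = 2 * ∑ τ ∈ New.biUnion Fam.charged, 2 ^ (l - ex sm τ.1) := by
        rw [Finset.sum_biUnion (hIS.pairwiseDisjoint_charged.subset fun S hS => (hNew hS).1),
          Finset.mul_sum]
        simp only [Finset.mul_sum]
    _ ≤ _ := by
        gcongr
        exact Finset.biUnion_subset.mpr fun S hS =>
          hIS.charged_subset_alive_inter_dead (hNew hS).1 (hNew hS).2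

theorem M_succ_le : Fam.M sm (l + 1) ≤ 2 * Fam.M sm l := by
  have hnew : ∑ τ ∈ (Fam.alive sm (l + 1)).filter (fun τ => ¬ ex sm τ.1 ≤ l),
      2 ^ (l + 1 - ex sm τ.1) =
        ((Fam.alive sm (l + 1)).filter (fun τ => ¬ ex sm τ.1 ≤ l)).card := by
    rw [Finset.card_eq_sum_ones]
    refine Finset.sum_congr rfl fun τ hτ => ?_
    obtain ⟨hτ, hex⟩ := Finset.mem_filter.mp hτ
    have := (mem_Ex.mp (mem_alive.mp hτ).1).2
    simp only [ex] at hex ⊢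
    rw [show l + 1 - (τ.1.card - sm.card) = 0 by omega, pow_zero]
  rw [M_eq_sum_alive, M_eq_sum_alive,
    ← Finset.sum_filter_add_sum_filter_not _ (fun τ => ex sm τ.1 ≤ l), hnew,
    ← Finset.sum_inter_add_sum_sdiff (Fam.alive sm l) (Fam.dead sm (l + 1)), mul_add,
    add_comm (2 * _)]
  gcongr
  · exact sum_alive_succ_filter_le
  · exact card_alive_succ_filter_le.trans hIS.sum_ncard_hat_le

theorem M_le : Fam.M sm x ≤ 2 ^ x * sm.card := by
  induction x with
  | zero =>
    rw [pow_zero, one_mul, M, hIS.Ex_zero, Finset.sum_singleton, Nat.zero_sub,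
      pow_zero, one_mul]
    exact (Set.ncard_le_ncard ((Set.sep_subset _ _).trans hat_subset)).trans
      (Set.ncard_coe_finset sm).le
  | succ x ih =>
    calc Fam.M sm (x + 1) ≤ 2 * Fam.M sm x := hIS.M_succ_le
      _ ≤ 2 ^ (x + 1) * sm.card := by rw [pow_succ', mul_assoc]; exact Nat.mul_le_mul_left 2 ih

theorem dead_zero : Fam.dead sm 0 = ∅ := by
  refine Finset.eq_empty_of_forall_notMem fun τ hτ => ?_
  obtain ⟨hU, -, K, hK, hUK, -⟩ := mem_dead.mp hτ
  have := hIS.SM _ hU _ (mem_Ex.mp hK).1 hUK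
  have := (mem_Ex.mp hK).2
  have := hIS.card_sm_le hU
  omega

theorem dead_succ_subset :
    Fam.dead sm (l + 1) ⊆ Fam.dead sm l ∪ Fam.alive sm l ∩ Fam.dead sm (l + 1) := by
  intro τ hτ
  by_cases hl : τ ∈ Fam.dead sm l
  · exact Finset.mem_union_left _ hl
  obtain ⟨hU, hw, K, hK, hUK, hwK⟩ := mem_dead.mp hτ
  have := hIS.SM _ hU _ (mem_Ex.mp hK).1 hUK
  have := (mem_Ex.mp hK).2
  refine Finset.mem_union_right _ (Finset.mem_inter.mpr ⟨mem_alive.mpr ⟨mem_Ex.mpr ⟨hU, ?_⟩,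
    hw, fun hkill => hl (mem_dead.mpr ⟨hU, hw, hkill⟩)⟩, hτ⟩)
  omega

theorem card_dead_add_le : (Fam.dead sm x).card + sm.card ≤ 2 ^ x * sm.card := by
  induction x with
  | zero => simp [hIS.dead_zero]
  | succ x ih =>
    have hstep : (Fam.dead sm (x + 1)).card ≤ (Fam.dead sm x).card + Fam.M sm x :=
      calc _ ≤ (Fam.dead sm x ∪ Fam.alive sm x ∩ Fam.dead sm (x + 1)).card :=
            Finset.card_le_card hIS.dead_succ_subset
        _ ≤ (Fam.dead sm x).card + (Fam.alive sm x).card :=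
            (Finset.card_union_le _ _).trans
              (Nat.add_le_add_left (Finset.card_le_card Finset.inter_subset_left) _)
        _ ≤ _ := Nat.add_le_add_left card_alive_le_M _
    have := hIS.M_le (x := x)
    rw [pow_succ, mul_comm _ 2, mul_assoc, two_mul]
    omega

theorem card_erase_Ex_le_card_dead : ((Fam.Ex sm x).erase sm).card ≤ (Fam.dead sm x).card := by
  refine Finset.card_le_card_of_forall_subsingleton (fun S τ => τ ∈ Fam.charged S)
    (fun S hS => ?_) (fun τ _ S₁ h₁ S₂ h₂ => ?_)
  · obtain ⟨hne, hEx⟩ := Finset.mem_erase.mp hS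
    obtain ⟨τ, hτ⟩ := hIS.charged_nonempty (mem_Ex.mp hEx).1 hne
    exact ⟨τ, charged_subset_dead hEx hτ, hτ⟩
  · by_contra hne
    exact Finset.disjoint_left.mp (hIS.pairwiseDisjoint_charged
      (mem_Ex.mp (Finset.mem_of_mem_erase h₁.1)).1
      (mem_Ex.mp (Finset.mem_of_mem_erase h₂.1)).1 hne) h₁.2 h₂.2

end IsIS

end

end ISFamily

open ISFamily in
/-- the number of principal elements of excess at most `x`
is at most `2^{x+1} · |sm(F)|`. -/
theorem principal_count_bound {V : Type*} [DecidableEq V] [Fintype V]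
    (Fam : ISFamily V) (sm : Finset V) (hIS : Fam.IsIS sm) (x : ℕ) :
    {S | S ∈ Fam.F ∧ ex sm S ≤ x ∧ (Fam.hat S).Nonempty}.ncard ≤
      2 ^ (x + 1) * sm.card := by
  calc _ ≤ ((Fam.Ex sm x).erase sm).card + sm.card := ncard_principal_le
    _ ≤ (Fam.dead sm x).card + sm.card := Nat.add_le_add_right hIS.card_erase_Ex_le_card_dead _
    _ ≤ 2 ^ x * sm.card := hIS.card_dead_add_le
    _ ≤ 2 ^ (x + 1) * sm.card := by gcongr <;> omega
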